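/- Let P ⊆ ∘Δ and let J ⊆ ∘I be nonempty. (1) If P is a closed set, then ⟨P⟩ ⊔ Δ^im₊ is a convex set. (2) If P is a pointed closed set, then ⟨P⟩ is a real convex set. (3) If P is a pointed biclosed set in ∘Δ_J, then ⟨P⟩ is a real biconvex set in Δ_{J+}. -/

import Mathlib

/-!
Since `δ` lies outside the span of `∘Π`, every element of `Δ` is uniquely `mδ + ε` with `ε` in
that span, and `ε ∈ ∘Δ` or `ε = 0` according as the root is real or imaginary. Adding two elements
`aδ + ε`, `bδ + η` of `⟨P⟩` adds their finite parts: if the sum is a real root, `ε + η ∈ ∘Δ` lies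
in `P` by closedness; otherwise `η = -ε` and the sum is in `Δ^im₊`, which cannot happen when `P`
is pointed. For the complement, an element of `Δ_{J+} ∖ ⟨P⟩` has finite part in
`(∘Δ_J ∖ P) ∪ {0}`, and closedness of `∘Δ_J ∖ P` keeps a sum of two such parts out of `P`.
-/

open scoped Pointwise

section

variable {ι V : Type*} [Fintype ι] [Nonempty ι] [AddCommGroup V] [Module ℝ V]

/-- The length of `w` with respect to a generating set `S` of a group. -/
noncomputable def lenG {G : Type*} [Group G] (S : Set G) (w : G) : ℕ :=
  sInf {n | ∃ l : List G, (∀ x ∈ l, x ∈ S) ∧ l.length = n ∧ l.prod = w}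

/-- `v` is a nonnegative linear combination of the simple roots `α` of `∘Δ`. -/
def PosoComb (α : ι → V) (v : V) : Prop :=
  ∃ c : ι → ℝ, (∀ i, 0 ≤ c i) ∧ v = ∑ i, c i • α i

/-- The parabolic subgroup `∘W_J = ⟨s_j | j ∈ J⟩` of the finite Weyl group, realized
inside the group of linear automorphisms of `𝔥* = V`. -/
def WoJ (α : ι → V) (s : V → V ≃ₗ[ℝ] V) (J : Set ι) : Subgroup (V ≃ₗ[ℝ] V) :=
  Subgroup.closure ((fun j => s (α j)) '' J)

/-- `∘Δ_J = ∘W_J(∘Π_J)` (so `∘Δ_∅ = ∅`). -/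
def DeloJ (α : ι → V) (s : V → V ≃ₗ[ℝ] V) (J : Set ι) : Set V :=
  {v | ∃ g ∈ WoJ α s J, ∃ j ∈ J, v = g (α j)}

/-- `∘Δ`, the root system of the underlying finite-dimensional simple Lie algebra. -/
def Delo (α : ι → V) (s : V → V ≃ₗ[ℝ] V) : Set V := DeloJ α s Set.univ

/-- `∘Δ^K_{J+} = (∘Δ_J ∖ ∘Δ_K) ∩ ∘Δ₊`. -/
def DeloKJpos (α : ι → V) (s : V → V ≃ₗ[ℝ] V) (J K : Set ι) : Set V :=
  (DeloJ α s J \ DeloJ α s K) ∩ {v | PosoComb α v}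

/-- `∘Δ^K_{J−} = (∘Δ_J ∖ ∘Δ_K) ∩ ∘Δ₋`. -/
def DeloKJneg (α : ι → V) (s : V → V ≃ₗ[ℝ] V) (J K : Set ι) : Set V :=
  (DeloJ α s J \ DeloJ α s K) ∩ {v | PosoComb α (-v)}

/-- The set `∘W^K_J` of minimal-length representatives of the right cosets `∘W_J/∘W_K`. -/
def MinReps (α : ι → V) (s : V → V ≃ₗ[ℝ] V) (J K : Set ι) : Set (V ≃ₗ[ℝ] V) :=
  {w | w ∈ WoJ α s J ∧ ∀ v ∈ WoJ α s K,
    lenG (Set.range fun i => s (α i)) w ≤ lenG (Set.range fun i => s (α i)) (w * v)}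

/-- The affine simple roots `Π = {α₀ = δ − θ} ∪ ∘Π`, indexed by `Option ι`. -/
def alHat (α : ι → V) (δ θ : V) : Option ι → V := fun o => o.elim (δ - θ) α

/-- `v` is a nonnegative linear combination of the affine simple roots. -/
def PosComb (α : ι → V) (δ θ : V) (v : V) : Prop :=
  ∃ c : Option ι → ℝ, (∀ o, 0 ≤ c o) ∧ v = ∑ o, c o • alHat α δ θ o

/-- The real roots `Δ^re = {mδ + ε | m ∈ ℤ, ε ∈ ∘Δ}`. -/
def DelRe (α : ι → V) (δ : V) (s : V → V ≃ₗ[ℝ] V) : Set V :=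
  {v | ∃ m : ℤ, ∃ ε ∈ Delo α s, v = m • δ + ε}

/-- The imaginary roots `Δ^im = {mδ | m ∈ ℤ ∖ {0}}`. -/
def DelIm (δ : V) : Set V := {v | ∃ m : ℤ, m ≠ 0 ∧ v = m • δ}

/-- The affine root system `Δ = Δ^re ∪ Δ^im`. -/
def Del (α : ι → V) (δ : V) (s : V → V ≃ₗ[ℝ] V) : Set V := DelRe α δ s ∪ DelIm δ

/-- The positive roots `Δ₊` (relative to `Π`). -/
def DelPos (α : ι → V) (δ θ : V) (s : V → V ≃ₗ[ℝ] V) : Set V :=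
  {v ∈ Del α δ s | PosComb α δ θ v}

/-- The negative roots `Δ₋ = −Δ₊`. -/
def DelNeg (α : ι → V) (δ θ : V) (s : V → V ≃ₗ[ℝ] V) : Set V :=
  {v | -v ∈ DelPos α δ θ s}

/-- `Δ^re₊ = Δ^re ∩ Δ₊`. -/
def DelRePos (α : ι → V) (δ θ : V) (s : V → V ≃ₗ[ℝ] V) : Set V :=
  DelRe α δ s ∩ DelPos α δ θ s

/-- `Δ^im₊ = {mδ | m ≥ 1}`. -/
def DelImPos (δ : V) : Set V := {v | ∃ m : ℕ, 0 < m ∧ v = (m : ℤ) • δ}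

/-- `⟨ε⟩ = {mδ + ε | m ∈ ℤ≥0} ∩ Δ^re₊`. -/
def brkt (α : ι → V) (δ θ : V) (s : V → V ≃ₗ[ℝ] V) (ε : V) : Set V :=
  {v | ∃ m : ℕ, v = (m : ℤ) • δ + ε} ∩ DelRePos α δ θ s

/-- `⟨P⟩ = ⋃_{ε ∈ P} ⟨ε⟩`. -/
def brSet (α : ι → V) (δ θ : V) (s : V → V ≃ₗ[ℝ] V) (P : Set V) : Set V :=
  ⋃ ε ∈ P, brkt α δ θ s ε

/-- `Δ^re_J = {mδ + ε | m ∈ ℤ, ε ∈ ∘Δ_J}`. -/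
def DelReJ (α : ι → V) (δ : V) (s : V → V ≃ₗ[ℝ] V) (J : Set ι) : Set V :=
  {v | ∃ m : ℤ, ∃ ε ∈ DeloJ α s J, v = m • δ + ε}

/-- `Δ_J = Δ^re_J ∪ Δ^im`. -/
def DelJ (α : ι → V) (δ : V) (s : V → V ≃ₗ[ℝ] V) (J : Set ι) : Set V :=
  DelReJ α δ s J ∪ DelIm δ

/-- `Δ_{J+} = Δ_J ∩ Δ₊`. -/
def DelJPos (α : ι → V) (δ θ : V) (s : V → V ≃ₗ[ℝ] V) (J : Set ι) : Set V :=
  DelJ α δ s J ∩ DelPos α δ θ s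

/-- `Δ_{J+} = ⟨∘Δ_J⟩ ∪ Δ^im₊` (the description used from Section 5 onwards). -/
def DelJPosB (α : ι → V) (δ θ : V) (s : V → V ≃ₗ[ℝ] V) (J : Set ι) : Set V :=
  brSet α δ θ s (DeloJ α s J) ∪ DelImPos δ

/-- The set of highest roots of the irreducible components of `∘Δ_J`, i.e. the maximal
elements of `∘Δ_{J+}`: the positive roots `ε` of `∘Δ_J` such that no `ε + α_j` is a root. -/
def HighRoots (α : ι → V) (s : V → V ≃ₗ[ℝ] V) (J : Set ι) : Set V :=
  {ε ∈ DeloJ α s J | PosoComb α ε ∧ ∀ j ∈ J, ε + α j ∉ DeloJ α s J}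

/-- `Π_J = ∘Π_J ⊔ {δ − θ_{J_c} | c}`. -/
def PiJ (α : ι → V) (δ : V) (s : V → V ≃ₗ[ℝ] V) (J : Set ι) : Set V :=
  (α '' J) ∪ (fun x => δ - x) '' HighRoots α s J

/-- `S_J = {s_α | α ∈ Π_J}`. -/
def SJ (α : ι → V) (δ : V) (s : V → V ≃ₗ[ℝ] V) (J : Set ι) : Set (V ≃ₗ[ℝ] V) :=
  s '' PiJ α δ s J

/-- `W_J = ⟨S_J⟩` (so `W_∅ = {1}`). -/
def WJ (α : ι → V) (δ : V) (s : V → V ≃ₗ[ℝ] V) (J : Set ι) : Subgroup (V ≃ₗ[ℝ] V) :=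
  Subgroup.closure (SJ α δ s J)

/-- `Φ_J(y) = {β ∈ Δ_{J+} | y⁻¹(β) < 0}`, with `Δ_{J+} = Δ_J ∩ Δ₊`. -/
def PhiJ (α : ι → V) (δ θ : V) (s : V → V ≃ₗ[ℝ] V) (J : Set ι) (y : V ≃ₗ[ℝ] V) : Set V :=
  {β ∈ DelJPos α δ θ s J | y⁻¹ β ∈ DelNeg α δ θ s}

/-- `Φ_J(y) = {β ∈ Δ_{J+} | y⁻¹(β) < 0}`, with `Δ_{J+} = ⟨∘Δ_J⟩ ∪ Δ^im₊`. -/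
def PhiJb (α : ι → V) (δ θ : V) (s : V → V ≃ₗ[ℝ] V) (J : Set ι) (y : V ≃ₗ[ℝ] V) : Set V :=
  {β ∈ DelJPosB α δ θ s J | y⁻¹ β ∈ DelNeg α δ θ s}

/-- `Δ^K_J(u, −) = ⟨u∘Δ^K_{J−}⟩`. -/
def DKJm (α : ι → V) (δ θ : V) (s : V → V ≃ₗ[ℝ] V) (J K : Set ι) (u : V ≃ₗ[ℝ] V) : Set V :=
  brSet α δ θ s (⇑u '' DeloKJneg α s J K)

/-- `Δ^K_J(u, +) = ⟨u∘Δ^K_{J+}⟩`. -/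
def DKJp (α : ι → V) (δ θ : V) (s : V → V ≃ₗ[ℝ] V) (J K : Set ι) (u : V ≃ₗ[ℝ] V) : Set V :=
  brSet α δ θ s (⇑u '' DeloKJpos α s J K)

/-- `B` is a convex set in `A`: `B ⊆ A` and `β, γ ∈ B`, `β + γ ∈ A` imply `β + γ ∈ B`. -/
def ConvexIn (A B : Set V) : Prop :=
  B ⊆ A ∧ ∀ x ∈ B, ∀ y ∈ B, x + y ∈ A → x + y ∈ B

/-- `B` is a biconvex set in `A`: both `B` and `A ∖ B` are convex sets in `A`. -/
def BiconvexIn (A B : Set V) : Prop :=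
  ConvexIn A B ∧ ConvexIn A (A \ B)

/-- `P ⊆ ∘Δ` is a closed set. -/
def ClosedIn (Δo P : Set V) : Prop :=
  ∀ ε ∈ P, ∀ η ∈ P, ε + η ∈ Δo → ε + η ∈ P

/-- The coroot `α_j^∨ = 2α_j/(α_j|α_j)`. -/
noncomputable def coroot (α : ι → V) (B : V →ₗ[ℝ] V →ₗ[ℝ] ℝ) (j : ι) : V :=
  (2 / B (α j) (α j)) • α j

/-- The coroot lattice `∘Q^∨_J = ⊕_{j ∈ J} ℤ α_j^∨`. -/
def QJ (α : ι → V) (B : V →ₗ[ℝ] V →ₗ[ℝ] ℝ) (J : Set ι) : Set V :=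
  {lam | ∃ c : ι → ℤ, (∀ j, j ∉ J → c j = 0) ∧ lam = ∑ j, c j • coroot α B j}

/-- `g` acts as the translation `t_λ`: `g(μ) = μ − (μ|λ)δ` for `μ` in the span of `Π`. -/
def IsTransl (α : ι → V) (δ θ : V) (B : V →ₗ[ℝ] V →ₗ[ℝ] ℝ) (lam : V)
    (g : V ≃ₗ[ℝ] V) : Prop :=
  ∀ μ ∈ Submodule.span ℝ (Set.range (alHat α δ θ)), g μ = μ - B μ lam • δ

/-- The translation subgroup `T_J = {t_λ | λ ∈ ∘Q^∨_J}` of `W_J`. -/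
def TJ (α : ι → V) (δ θ : V) (B : V →ₗ[ℝ] V →ₗ[ℝ] ℝ) (s : V → V ≃ₗ[ℝ] V)
    (J : Set ι) : Set (V ≃ₗ[ℝ] V) :=
  {g | g ∈ WJ α δ s J ∧ ∃ lam ∈ QJ α B J, IsTransl α δ θ B lam g}

/-- The hypotheses describing the root datum of an untwisted affine Kac–Moody Lie algebra
over `ℝ`: `α` are the simple roots of the underlying finite-dimensional simple Lie algebra,
`δ` is the null root, `θ` the highest root of `∘Δ`, `B` the standard invariant bilinear form,
and `s a` the reflection in a (real) root `a`. -/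
structure AffineSetup (α : ι → V) (δ θ : V) (B : V →ₗ[ℝ] V →ₗ[ℝ] ℝ)
    (s : V → V ≃ₗ[ℝ] V) : Prop where
  indep : LinearIndependent ℝ (alHat α δ θ)
  Bsymm : ∀ u v : V, B u v = B v u
  Bpos : ∀ v ∈ Delo α s, 0 < B v v
  refl_def : ∀ a : V, B a a ≠ 0 → ∀ v : V, s a v = v - (2 * B v a / B a a) • a
  delta_orth : ∀ i : ι, B δ (α i) = 0
  delta_null : B δ δ = 0
  theta_high : θ ∈ HighRoots α s Set.univ
  cryst : ∀ i : ι, ∀ v ∈ Delo α s, ∃ m : ℤ, s (α i) v = v - m • α i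
  base : ∀ v ∈ Delo α s, Xor' (PosoComb α v) (PosoComb α (-v))
  finite : (Delo α s).Finite
  reduced : ∀ v ∈ Delo α s, (2 : ℝ) • v ∉ Delo α s
  irred : ∀ A : Set ι, (∀ i ∈ A, ∀ j ∈ Aᶜ, s (α i) (α j) = α j) → A = ∅ ∨ A = Set.univ

end

section

variable {K V : Type*} [Field K] [AddCommGroup V] [Module K V]

theorem Submodule.eq_of_smul_add_eq_smul_add {W : Submodule K V} {δ : V} (hδ : δ ∉ W)
    {m₁ m₂ : K} {ε₁ ε₂ : V} (h₁ : ε₁ ∈ W) (h₂ : ε₂ ∈ W) (h : m₁ • δ + ε₁ = m₂ • δ + ε₂) :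
    m₁ = m₂ ∧ ε₁ = ε₂ := by
  obtain rfl : m₁ = m₂ := by
    by_contra hne
    have hdiff : (m₁ - m₂) • δ = ε₂ - ε₁ := by
      rw [sub_smul]; linear_combination (norm := module) h
    apply hδ
    rw [← inv_smul_smul₀ (sub_ne_zero.2 hne) δ, hdiff]
    exact W.smul_mem _ (sub_mem h₂ h₁)
  exact ⟨rfl, add_left_cancel h⟩

theorem Submodule.eq_of_zsmul_add_eq_zsmul_add [CharZero K] {W : Submodule K V} {δ : V}
    (hδ : δ ∉ W) {m₁ m₂ : ℤ} {ε₁ ε₂ : V} (h₁ : ε₁ ∈ W) (h₂ : ε₂ ∈ W)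
    (h : m₁ • δ + ε₁ = m₂ • δ + ε₂) : m₁ = m₂ ∧ ε₁ = ε₂ := by
  simp only [← Int.cast_smul_eq_zsmul K] at h
  obtain ⟨hm, hε⟩ := eq_of_smul_add_eq_smul_add hδ h₁ h₂ h
  exact ⟨Int.cast_injective hm, hε⟩

end

section

variable {V : Type*} [AddCommGroup V]

theorem natCast_zsmul_add_add_natCast_zsmul_add (a b : ℕ) (δ ε η : V) :
    (a : ℤ) • δ + ε + ((b : ℤ) • δ + η) = ((a + b : ℕ) : ℤ) • δ + (ε + η) := by
  push_cast; rw [add_zsmul]; abel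

theorem ConvexIn.mono {A A' B : Set V} (h : ConvexIn A B) (hBA' : B ⊆ A') (hA'A : A' ⊆ A) :
    ConvexIn A' B :=
  ⟨hBA', fun x hx y hy hxy => h.2 x hx y hy (hA'A hxy)⟩

theorem ClosedIn.add_mem_of_mem_insert_zero {D Q : Set V} (hQ : ClosedIn D Q)
    (h0 : (0 : V) ∉ D) {x y : V} (hx : x ∈ insert 0 Q) (hy : y ∈ insert 0 Q)
    (hxy : x + y ∈ D) : x + y ∈ Q := by
  rcases hx with rfl | hx <;> rcases hy with rfl | hy
  · exact absurd (zero_add (0 : V) ▸ hxy) h0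
  · simpa using hy
  · simpa using hx
  · exact hQ x hx y hy hxy

end

namespace AffineSetup

open Submodule Set

variable {ι V : Type*} [AddCommGroup V] [Module ℝ V] {α : ι → V} {s : V → V ≃ₗ[ℝ] V}

theorem alpha_mem_delo (i : ι) : α i ∈ Delo α s :=
  ⟨1, one_mem _, i, trivial, rfl⟩

variable [Fintype ι] {δ θ : V} {B : V →ₗ[ℝ] V →ₗ[ℝ] ℝ}

theorem reflection_reflection (h : AffineSetup α δ θ B s) {a : V} (ha : B a a ≠ 0) (v : V) :
    s a (s a v) = v := by
  rw [h.refl_def a ha, h.refl_def a ha]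
  simp only [map_sub, map_smul, LinearMap.sub_apply, LinearMap.smul_apply, smul_eq_mul]
  match_scalars <;> field_simp
  ring

theorem reflection_mem_span (h : AffineSetup α δ θ B s) (i : ι) {v : V}
    (hv : v ∈ span ℝ (range α)) : s (α i) v ∈ span ℝ (range α) := by
  rw [h.refl_def _ (h.Bpos _ (alpha_mem_delo i)).ne']
  exact sub_mem hv (smul_mem _ _ (subset_span ⟨i, rfl⟩))

theorem deloJ_subset_span (h : AffineSetup α δ θ B s) (J : Set ι) :
    DeloJ α s J ⊆ span ℝ (range α) := by
  rintro _ ⟨g, hg, j, -, rfl⟩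
  suffices ∀ v ∈ span ℝ (range α), g v ∈ span ℝ (range α) from this _ (subset_span ⟨j, rfl⟩)
  induction hg using Subgroup.closure_induction'' with
  | mem _ hx =>
    obtain ⟨i, -, rfl⟩ := hx
    exact fun v => h.reflection_mem_span i
  | inv_mem _ hx =>
    obtain ⟨i, -, rfl⟩ := hx
    intro v hv
    rw [← h.reflection_reflection (h.Bpos _ (alpha_mem_delo i)).ne' ((s (α i))⁻¹ v)]
    simpa using h.reflection_mem_span i hv
  | one => exact fun v hv => hv
  | mul _ _ _ _ hx hy => exact fun v hv => hx _ (hy v hv)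

theorem delta_notMem_span (h : AffineSetup α δ θ B s) : δ ∉ span ℝ (range α) := by
  have hα : alHat α δ θ '' range some = range α := by
    rw [← range_comp]; rfl
  have hα₀ := h.indep.notMem_span_image (s := range some) (x := none) (by simp)
  rw [hα] at hα₀
  exact fun hδ => hα₀ (sub_mem hδ (h.deloJ_subset_span univ h.theta_high.1))

theorem zero_notMem_delo (h : AffineSetup α δ θ B s) : (0 : V) ∉ Delo α s := by
  rintro ⟨g, -, j, -, hj⟩
  exact h.indep.ne_zero (some j) (g.map_eq_zero_iff.1 hj.symm)

theorem mem_delo_or_of_zsmul_add_mem_del (h : AffineSetup α δ θ B s) {m : ℤ} {ε : V}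
    (hε : ε ∈ span ℝ (range α)) (hv : m • δ + ε ∈ Del α δ s) :
    ε ∈ Delo α s ∨ (ε = 0 ∧ m ≠ 0) := by
  rcases hv with ⟨n, η, hη, hv⟩ | ⟨n, hn, hv⟩
  · obtain ⟨-, rfl⟩ := eq_of_zsmul_add_eq_zsmul_add h.delta_notMem_span hε
      (h.deloJ_subset_span univ hη) hv
    exact Or.inl hη
  · rw [← add_zero (n • δ)] at hv
    obtain ⟨rfl, rfl⟩ := eq_of_zsmul_add_eq_zsmul_add h.delta_notMem_span hε (zero_mem _) hv
    exact Or.inr ⟨rfl, hn⟩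

theorem nonneg_of_posComb_zsmul_add (h : AffineSetup α δ θ B s) {m : ℤ} {ε : V}
    (hε : ε ∈ span ℝ (range α)) (hv : PosComb α δ θ (m • δ + ε)) : 0 ≤ m := by
  obtain ⟨c, hc, hsum⟩ := hv
  have hsum' : (m : ℝ) • δ + ε = c none • δ + (∑ i, c (some i) • α i - c none • θ) := by
    rw [Int.cast_smul_eq_zsmul, hsum, Fintype.sum_option]
    simp only [alHat, Option.elim]
    module
  have hrest : ∑ i, c (some i) • α i - c none • θ ∈ span ℝ (range α) :=
    sub_mem (sum_mem fun i _ => smul_mem _ _ (subset_span ⟨i, rfl⟩))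
      (smul_mem _ _ (h.deloJ_subset_span univ h.theta_high.1))
  have hm := (eq_of_smul_add_eq_smul_add h.delta_notMem_span hε hrest hsum').1
  exact_mod_cast hm ▸ hc none

theorem delImPos_subset_delPos (h : AffineSetup α δ θ B s) :
    DelImPos δ ⊆ DelPos α δ θ s := by
  rintro _ ⟨m, hm, rfl⟩
  refine ⟨Or.inr ⟨m, by exact_mod_cast hm.ne', rfl⟩, ?_⟩
  obtain ⟨c, hc, hθ⟩ := h.theta_high.2.1
  -- `mδ = m(δ - θ) + mθ` and `θ` is a nonnegative combination of the `α i`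
  refine ⟨fun o => m * o.elim 1 c, fun o => mul_nonneg m.cast_nonneg ?_, ?_⟩
  · cases o
    exacts [zero_le_one, hc _]
  · simp only [Fintype.sum_option, alHat, Option.elim, mul_smul, ← Finset.smul_sum,
      ← hθ, natCast_zsmul, ← Nat.cast_smul_eq_nsmul ℝ]
    module

theorem mem_brSet_iff {P : Set V} (hP : P ⊆ Delo α s) {v : V} :
    v ∈ brSet α δ θ s P ↔ v ∈ DelPos α δ θ s ∧ ∃ ε ∈ P, ∃ m : ℕ, v = (m : ℤ) • δ + ε := by
  simp only [brSet, brkt, DelRePos, mem_iUnion, mem_inter_iff, mem_ofPred_eq, exists_prop]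
  constructor
  · rintro ⟨ε, hε, hm, -, hv⟩
    exact ⟨hv, ε, hε, hm⟩
  · rintro ⟨hv, ε, hε, m, rfl⟩
    exact ⟨ε, hε, ⟨m, rfl⟩, ⟨m, ε, hP hε, rfl⟩, hv⟩

theorem brSet_subset_delRePos (P : Set V) : brSet α δ θ s P ⊆ DelRePos α δ θ s :=
  iUnion₂_subset fun _ _ => inter_subset_right

theorem brSet_subset_delJPos {P : Set V} {J : Set ι} (hPJ : P ⊆ DeloJ α s J) :
    brSet α δ θ s P ⊆ DelJPos α δ θ s J := by
  simp only [brSet, brkt, DelRePos, iUnion₂_subset_iff]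
  rintro ε hε _ ⟨⟨m, rfl⟩, -, hv⟩
  exact ⟨Or.inl ⟨m, ε, hPJ hε, rfl⟩, hv⟩

theorem exists_eq_natCast_zsmul_add_of_mem_delJPos (h : AffineSetup α δ θ B s) {J : Set ι}
    {v : V} (hv : v ∈ DelJPos α δ θ s J) :
    ∃ m : ℕ, ∃ ε ∈ insert 0 (DeloJ α s J), v = (m : ℤ) • δ + ε := by
  obtain ⟨m, ε, hε, hvε⟩ : ∃ m : ℤ, ∃ ε ∈ insert 0 (DeloJ α s J), v = m • δ + ε := by
    rcases hv.1 with ⟨m, ε, hε, rfl⟩ | ⟨m, -, rfl⟩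
    exacts [⟨m, ε, Or.inr hε, rfl⟩, ⟨m, 0, Or.inl rfl, (add_zero _).symm⟩]
  have hεs : ε ∈ span ℝ (range α) := by
    rcases hε with rfl | hε
    exacts [zero_mem _, h.deloJ_subset_span J hε]
  have hm := h.nonneg_of_posComb_zsmul_add hεs (hvε ▸ hv.2.2)
  exact ⟨m.toNat, ε, hε, by rw [Int.toNat_of_nonneg hm, hvε]⟩

theorem add_mem_brSet_or_of_closedIn (h : AffineSetup α δ θ B s) {P : Set V}
    (hP : P ⊆ Delo α s) (hcl : ClosedIn (Delo α s) P) {x y : V}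
    (hx : x ∈ brSet α δ θ s P) (hy : y ∈ brSet α δ θ s P) (hxy : x + y ∈ DelPos α δ θ s) :
    x + y ∈ brSet α δ θ s P ∨ (x + y ∈ DelImPos δ ∧ ∃ ε ∈ P, -ε ∈ P) := by
  obtain ⟨-, ε, hε, a, rfl⟩ := (mem_brSet_iff hP).1 hx
  obtain ⟨-, η, hη, b, rfl⟩ := (mem_brSet_iff hP).1 hy
  have hspan := add_mem (h.deloJ_subset_span univ (hP hε)) (h.deloJ_subset_span univ (hP hη))
  rw [natCast_zsmul_add_add_natCast_zsmul_add] at hxy ⊢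
  rcases h.mem_delo_or_of_zsmul_add_mem_del hspan hxy.1 with hεη | ⟨hεη, hab⟩
  · exact Or.inl ((mem_brSet_iff hP).2 ⟨hxy, ε + η, hcl ε hε η hη hεη, a + b, rfl⟩)
  · refine Or.inr ⟨⟨a + b, by omega, by rw [hεη, add_zero]⟩, ε, hε, ?_⟩
    rwa [neg_eq_of_add_eq_zero_right hεη]

theorem add_mem_brSet_of_mem_delImPos {P : Set V} (hP : P ⊆ Delo α s) {x y : V}
    (hx : x ∈ brSet α δ θ s P) (hy : y ∈ DelImPos δ) (hxy : x + y ∈ DelPos α δ θ s) :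
    x + y ∈ brSet α δ θ s P := by
  obtain ⟨-, ε, hε, a, rfl⟩ := (mem_brSet_iff hP).1 hx
  obtain ⟨b, -, rfl⟩ := hy
  refine (mem_brSet_iff hP).2 ⟨hxy, ε, hε, a + b, ?_⟩
  push_cast; rw [add_zsmul]; abel

theorem convexIn_brSet_union_delImPos (h : AffineSetup α δ θ B s) {P : Set V}
    (hP : P ⊆ Delo α s) (hcl : ClosedIn (Delo α s) P) :
    ConvexIn (DelPos α δ θ s) (brSet α δ θ s P ∪ DelImPos δ) := by
  refine ⟨union_subset ((brSet_subset_delRePos P).trans inter_subset_right)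
    h.delImPos_subset_delPos, ?_⟩
  rintro x (hx | hx) y (hy | hy) hxy
  · exact (h.add_mem_brSet_or_of_closedIn hP hcl hx hy hxy).imp_right And.left
  · exact Or.inl (add_mem_brSet_of_mem_delImPos hP hx hy hxy)
  · rw [add_comm] at hxy ⊢
    exact Or.inl (add_mem_brSet_of_mem_delImPos hP hy hx hxy)
  · obtain ⟨a, ha, rfl⟩ := hx
    obtain ⟨b, -, rfl⟩ := hy
    exact Or.inr ⟨a + b, by omega, by push_cast; rw [add_zsmul]⟩

theorem convexIn_brSet (h : AffineSetup α δ θ B s) {P : Set V} (hP : P ⊆ Delo α s)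
    (hcl : ClosedIn (Delo α s) P) (hpt : P ∩ -P = ∅) :
    ConvexIn (DelPos α δ θ s) (brSet α δ θ s P) := by
  refine ⟨(brSet_subset_delRePos P).trans inter_subset_right, fun x hx y hy hxy => ?_⟩
  obtain hxy | ⟨-, ε, hε, hnε⟩ := h.add_mem_brSet_or_of_closedIn hP hcl hx hy hxy
  · exact hxy
  · exact absurd hpt (nonempty_iff_ne_empty.1 ⟨ε, hε, by simpa using hnε⟩)

theorem exists_eq_natCast_zsmul_add_of_mem_delJPos_diff_brSet (h : AffineSetup α δ θ B s)
    {P : Set V} (hP : P ⊆ Delo α s) {J : Set ι} {v : V}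
    (hv : v ∈ DelJPos α δ θ s J \ brSet α δ θ s P) :
    ∃ m : ℕ, ∃ ε ∈ insert 0 (DeloJ α s J \ P), v = (m : ℤ) • δ + ε := by
  obtain ⟨hvJ, hvP⟩ := hv
  obtain ⟨m, ε, hε, rfl⟩ := h.exists_eq_natCast_zsmul_add_of_mem_delJPos hvJ
  refine ⟨m, ε, ?_, rfl⟩
  rcases hε with rfl | hε
  · exact Or.inl rfl
  · exact Or.inr ⟨hε, fun hεP => hvP ((mem_brSet_iff hP).2 ⟨hvJ.2, ε, hεP, m, rfl⟩)⟩

theorem convexIn_delJPos_diff_brSet (h : AffineSetup α δ θ B s) {P : Set V}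
    (hP : P ⊆ Delo α s) {J : Set ι} (hcl : ClosedIn (Delo α s) (DeloJ α s J \ P)) :
    ConvexIn (DelJPos α δ θ s J) (DelJPos α δ θ s J \ brSet α δ θ s P) := by
  refine ⟨sdiff_subset, fun x hx y hy hxy => ⟨hxy, fun hmem => ?_⟩⟩
  obtain ⟨a, ε₁, hε₁, rfl⟩ := h.exists_eq_natCast_zsmul_add_of_mem_delJPos_diff_brSet hP hx
  obtain ⟨b, ε₂, hε₂, rfl⟩ := h.exists_eq_natCast_zsmul_add_of_mem_delJPos_diff_brSet hP hy
  obtain ⟨-, ζ, hζ, c, hc⟩ := (mem_brSet_iff hP).1 hmem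
  have hspan : ∀ {ε}, ε ∈ insert 0 (DeloJ α s J \ P) → ε ∈ span ℝ (range α) := by
    rintro ε (rfl | hε)
    exacts [zero_mem _, h.deloJ_subset_span J hε.1]
  rw [natCast_zsmul_add_add_natCast_zsmul_add] at hc
  obtain ⟨-, rfl⟩ := eq_of_zsmul_add_eq_zsmul_add h.delta_notMem_span
    (add_mem (hspan hε₁) (hspan hε₂)) (h.deloJ_subset_span univ (hP hζ)) hc
  exact (hcl.add_mem_of_mem_insert_zero h.zero_notMem_delo hε₁ hε₂ (hP hζ)).2 hζ

end AffineSetup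

section

variable {ι V : Type*} [Fintype ι] [Nonempty ι] [AddCommGroup V] [Module ℝ V]

open AffineSetup

theorem statement12_general (α : ι → V) (δ θ : V) (B : V →ₗ[ℝ] V →ₗ[ℝ] ℝ) (s : V → V ≃ₗ[ℝ] V)
    (h : AffineSetup α δ θ B s) (J : Set ι) (P : Set V)
    (hP : P ⊆ Delo α s) :
    (ClosedIn (Delo α s) P →
      ConvexIn (DelPos α δ θ s) (brSet α δ θ s P ∪ DelImPos δ)) ∧
    (ClosedIn (Delo α s) P → P ∩ (-P) = ∅ →
      ConvexIn (DelPos α δ θ s) (brSet α δ θ s P) ∧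
        brSet α δ θ s P ⊆ DelRePos α δ θ s) ∧
    (P ⊆ DeloJ α s J → P ∩ (-P) = ∅ → ClosedIn (Delo α s) P →
      ClosedIn (Delo α s) (DeloJ α s J \ P) →
      BiconvexIn (DelJPos α δ θ s J) (brSet α δ θ s P) ∧
        brSet α δ θ s P ⊆ DelRePos α δ θ s) := by
  refine ⟨h.convexIn_brSet_union_delImPos hP,
    fun hcl hpt => ⟨h.convexIn_brSet hP hcl hpt, brSet_subset_delRePos P⟩,
    fun hPJ hpt hcl hclc =>
      ⟨⟨?_, h.convexIn_delJPos_diff_brSet hP hclc⟩, brSet_subset_delRePos P⟩⟩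
  exact (h.convexIn_brSet hP hcl hpt).mono (brSet_subset_delJPos hPJ) Set.inter_subset_right

/-- Proposition 5.8: (1) if `P ⊆ ∘Δ` is closed, then `⟨P⟩ ⊔ Δ^im₊` is a convex set;
(2) if `P` is pointed closed, then `⟨P⟩` is a real convex set; (3) if `P` is a pointed
biclosed set in `∘Δ_J`, then `⟨P⟩` is a real biconvex set in `Δ_{J+}`. -/
theorem statement12 (α : ι → V) (δ θ : V) (B : V →ₗ[ℝ] V →ₗ[ℝ] ℝ) (s : V → V ≃ₗ[ℝ] V)
    (h : AffineSetup α δ θ B s) (J : Set ι) (hJ : J.Nonempty) (P : Set V)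
    (hP : P ⊆ Delo α s) :
    (ClosedIn (Delo α s) P →
      ConvexIn (DelPos α δ θ s) (brSet α δ θ s P ∪ DelImPos δ)) ∧
    (ClosedIn (Delo α s) P → P ∩ (-P) = ∅ →
      ConvexIn (DelPos α δ θ s) (brSet α δ θ s P) ∧
        brSet α δ θ s P ⊆ DelRePos α δ θ s) ∧
    (P ⊆ DeloJ α s J → P ∩ (-P) = ∅ → ClosedIn (Delo α s) P →
      ClosedIn (Delo α s) (DeloJ α s J \ P) →
      BiconvexIn (DelJPos α δ θ s J) (brSet α δ θ s P) ∧
        brSet α δ θ s P ⊆ DelRePos α δ θ s) :=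
  statement12_general α δ θ B s h J P hP

end
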